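/- Let z ∈ (0,1), let λ > 0, let q be a real number with q ≥ max{1, (2z/λ)^{1/(1−z)}} and λ ≤ q^z, and let m ≥ 0 be an integer. Then ∑_{i=0}^{m−1} (i + q)^{−2z} · ∏_{j=i+1}^{m−1} (1 − λ·(j + q)^{−z}) ≤ (2/λ) · (m + q)^{−z}. -/

import Mathlib

/-!
Write `a n = (n + q)^(-z)`, so the sum is `S m = ∑_{i<m} a i ^ 2 ∏_{i<j<m} (1 - λ a j)` and satisfies
`S (m+1) = (1 - λ a m) S m + (a m)^2`. If `S m ≤ (2/λ) a m`, then
`S (m+1) ≤ (2/λ) a m - (a m)^2`, and this is at most `(2/λ) a (m+1)` because, by Bernoulli's inequality,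
`a m - a (m+1) ≤ z (m+q)^(-z-1)`, which the condition `q^(1-z) ≥ 2z/λ` bounds by `(λ/2) (a m)^2`.
-/

open Finset

theorem one_sub_mul_le_rpow_neg_one_add {s p : ℝ} (hs : 0 ≤ s) (hp0 : 0 ≤ p) (hp1 : p ≤ 1) :
    1 - p * s ≤ (1 + s) ^ (-p) := by
  have hps : 0 < 1 + p * s := by positivity
  calc 1 - p * s ≤ (1 + p * s)⁻¹ := by
        rw [← one_div, le_div_iff₀ hps]
        nlinarith [sq_nonneg (p * s)]
    _ ≤ ((1 + s) ^ p)⁻¹ :=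
        inv_anti₀ (by positivity) (rpow_one_add_le_one_add_mul_self (by linarith) hp0 hp1)
    _ = (1 + s) ^ (-p) := (Real.rpow_neg (by linarith) p).symm

theorem rpow_neg_sub_rpow_neg_add_one_le {x p : ℝ} (hx : 0 < x) (hp0 : 0 ≤ p) (hp1 : p ≤ 1) :
    x ^ (-p) - (x + 1) ^ (-p) ≤ p * x ^ (-p - 1) := by
  have hsplit : (x + 1) ^ (-p) = x ^ (-p) * (1 + x⁻¹) ^ (-p) := by
    rw [← Real.mul_rpow hx.le (by positivity), mul_add, mul_one, mul_inv_cancel₀ hx.ne']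
  have hbound : x ^ (-p) * (1 - p * x⁻¹) ≤ (x + 1) ^ (-p) := by
    rw [hsplit]
    exact mul_le_mul_of_nonneg_left
      (one_sub_mul_le_rpow_neg_one_add (by positivity) hp0 hp1) (by positivity)
  have hpow : x ^ (-p - 1) = x ^ (-p) * x⁻¹ := by
    rw [Real.rpow_sub_one hx.ne', div_eq_mul_inv]
  rw [hpow]
  linarith

theorem div_mul_rpow_neg_sub_rpow_neg_add_one_le_sq {x p c : ℝ} (hx : 0 < x) (hp0 : 0 ≤ p)
    (hp1 : p ≤ 1) (hc : 0 < c) (hxc : 2 * p / c ≤ x ^ (1 - p)) :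
    2 / c * (x ^ (-p) - (x + 1) ^ (-p)) ≤ (x ^ (-p)) ^ 2 := by
  have hsq : x ^ (1 - p) * x ^ (-p - 1) = (x ^ (-p)) ^ 2 := by
    rw [← Real.rpow_add hx, ← Real.rpow_natCast, ← Real.rpow_mul hx.le]
    ring_nf
  calc 2 / c * (x ^ (-p) - (x + 1) ^ (-p)) ≤ 2 / c * (p * x ^ (-p - 1)) := by
        gcongr
        exact rpow_neg_sub_rpow_neg_add_one_le hx hp0 hp1
    _ = 2 * p / c * x ^ (-p - 1) := by ring
    _ ≤ x ^ (1 - p) * x ^ (-p - 1) := by gcongr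
    _ = (x ^ (-p)) ^ 2 := hsq

theorem sum_mul_prod_Ico_succ {R : Type*} [CommSemiring R] (b f : ℕ → R) (m : ℕ) :
    ∑ i ∈ range (m + 1), b i * ∏ j ∈ Ico (i + 1) (m + 1), f j
      = (∑ i ∈ range m, b i * ∏ j ∈ Ico (i + 1) m, f j) * f m + b m := by
  rw [sum_range_succ, Ico_self, prod_empty, mul_one, sum_mul]
  congr 1
  refine sum_congr rfl fun i hi => ?_
  rw [prod_Ico_succ_top (by simpa using hi), mul_assoc]

theorem sum_sq_mul_prod_one_sub_mul_le {a : ℕ → ℝ} {c : ℝ} (hc : 0 < c) (ha₀ : 0 ≤ a 0)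
    (hca : ∀ n, c * a n ≤ 1) (hdec : ∀ n, 2 / c * (a n - a (n + 1)) ≤ a n ^ 2) (m : ℕ) :
    ∑ i ∈ range m, a i ^ 2 * ∏ j ∈ Ico (i + 1) m, (1 - c * a j) ≤ 2 / c * a m := by
  induction m with
  | zero => simpa using mul_nonneg (div_nonneg zero_le_two hc.le) ha₀
  | succ m ih =>
    rw [sum_mul_prod_Ico_succ]
    have hstep := mul_le_mul_of_nonneg_right ih (sub_nonneg.2 (hca m))
    have hexpand : 2 / c * a m * (1 - c * a m) = 2 / c * a m - 2 * a m ^ 2 := by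
      field_simp
    linarith [hdec m]

/-- **Elementary polynomial product-sum estimate.** For `z ∈ (0,1)`, `λ > 0`,
`q ≥ max{1, (2z/λ)^{1/(1−z)}}` with `λ ≤ q^z`, and any integer `m ≥ 0`,
`∑_{i=0}^{m−1} (i+q)^{−2z} ∏_{j=i+1}^{m−1} (1 − λ (j+q)^{−z}) ≤ (2/λ)(m+q)^{−z}`. -/
theorem product_sum_estimate_polynomial (z lam q : ℝ)
    (hz : z ∈ Set.Ioo (0 : ℝ) 1) (hlam : 0 < lam)
    (hq : max 1 ((2 * z / lam) ^ (1 / (1 - z))) ≤ q) (hlq : lam ≤ q ^ z) (m : ℕ) :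
    ∑ i ∈ Finset.range m,
        ((i : ℝ) + q) ^ (-(2 * z)) *
          ∏ j ∈ Finset.Ico (i + 1) m, (1 - lam * ((j : ℝ) + q) ^ (-z))
      ≤ (2 / lam) * ((m : ℝ) + q) ^ (-z) := by
  obtain ⟨hz0, hz1⟩ := hz
  have hq0 : 0 < q := zero_lt_one.trans_le (le_of_max_le_left hq)
  have hqz : 2 * z / lam ≤ q ^ (1 - z) :=
    (Real.rpow_inv_le_iff_of_pos (by positivity) hq0.le (by linarith)).1
      (by simpa only [one_div] using le_of_max_le_right hq)
  have hshift (n : ℕ) : q ≤ (n : ℝ) + q := le_add_of_nonneg_left n.cast_nonneg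
  have hsq (i : ℕ) : ((i : ℝ) + q) ^ (-(2 * z)) = (((i : ℝ) + q) ^ (-z)) ^ 2 := by
    rw [← Real.rpow_natCast, ← Real.rpow_mul (by positivity)]
    ring_nf
  simp only [hsq]
  refine sum_sq_mul_prod_one_sub_mul_le (a := fun n : ℕ => ((n : ℝ) + q) ^ (-z)) hlam
    (by positivity) (fun n => ?_) (fun n => ?_) m
  · rw [Real.rpow_neg (by positivity), ← div_eq_mul_inv, div_le_one (by positivity)]
    exact hlq.trans (Real.rpow_le_rpow hq0.le (hshift n) hz0.le)
  · have hcast : ((n + 1 : ℕ) : ℝ) + q = ((n : ℝ) + q) + 1 := by push_cast; ring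
    simp only [hcast]
    exact div_mul_rpow_neg_sub_rpow_neg_add_one_le_sq (by positivity) hz0.le hz1.le hlam
      (hqz.trans (Real.rpow_le_rpow hq0.le (hshift n) (by linarith)))
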